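/- Let W : ℝ² → ℂ be a smooth function of (x,t) with cos(W(x,t)) ≠ 0 everywhere, and set u := tan(W). (Note u + i ≠ 0 and u - i ≠ 0 automatically.) Then u satisfies ∂_t u = ∂_x² u - 2(∂_x u)²/(u + i) - 2i ∂_x u + u² + 1 if and only if W satisfies ∂_t W = ∂_x² W + i(2(∂_x W)² - 2 ∂_x W - i). -/

import Mathlib

noncomputable section

open Complex

/-- `∂/∂x` for a complex-valued function of `(x, t)`. -/
def dx2 (f : ℝ → ℝ → ℂ) : ℝ → ℝ → ℂ := fun x t => deriv (fun s => f s t) x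

/-- `∂/∂t` for a complex-valued function of `(x, t)`. -/
def dt2 (f : ℝ → ℝ → ℂ) : ℝ → ℝ → ℂ := fun x t => deriv (fun s => f x s) t


lemma hasDerivAt_dx2' (F : ℝ → ℝ → ℂ) (hF : Differentiable ℝ ↿F) (x t : ℝ) :
    HasDerivAt (fun s => F s t) (dx2 F x t) x := by
  have h : DifferentiableAt ℝ (fun s : ℝ => F s t) x :=
    by have := (hF (x, t)).comp x ((differentiableAt_id : DifferentiableAt ℝ (id : ℝ → ℝ) x).prodMk (differentiableAt_const t)); exact this
  exact h.hasDerivAt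

lemma hasDerivAt_dt2' (F : ℝ → ℝ → ℂ) (hF : Differentiable ℝ ↿F) (x t : ℝ) :
    HasDerivAt (fun s => F x s) (dt2 F x t) t := by
  have h : DifferentiableAt ℝ (fun s : ℝ => F x s) t :=
    (hF (x, t)).comp t ((differentiableAt_const x).prodMk differentiableAt_id)
  exact h.hasDerivAt

lemma contDiff_dx2' (F : ℝ → ℝ → ℂ) (hF : ContDiff ℝ (⊤ : ℕ∞) ↿F) : ContDiff ℝ (⊤ : ℕ∞) ↿(dx2 F) := by
  have h1 : ContDiff ℝ (⊤ : ℕ∞) (fun p : ℝ × ℝ => fderiv ℝ ↿F p (1, 0)) :=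
    (hF.fderiv_right (by simp)).clm_apply contDiff_const
  have h2 : ↿(dx2 F) = fun p : ℝ × ℝ => fderiv ℝ ↿F p (1, 0) := by
    funext p
    obtain ⟨x, t⟩ := p
    have hline : HasDerivAt (fun s : ℝ => (s, t)) ((1 : ℝ), (0 : ℝ)) x :=
      (hasDerivAt_id x).prodMk (hasDerivAt_const x t)
    have hd : HasDerivAt (fun s => F s t) (fderiv ℝ ↿F (x, t) (1, 0)) x :=
      by have := ((hF.differentiable (by simp) (x, t)).hasFDerivAt).comp_hasDerivAt x hline; exact this
    exact hd.deriv
  rw [h2]; exact h1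

lemma tan_id (z : ℂ) (hz : Complex.cos z ≠ 0) :
    1 + Complex.tan z ^ 2 = 1 / Complex.cos z ^ 2 := by
  rw [Complex.tan_eq_sin_div_cos, div_pow]
  field_simp
  exact Complex.cos_sq_add_sin_sq z

lemma alg (tw wx wxx : ℂ) (hui : tw + I ≠ 0) :
    wxx * (1 + tw ^ 2) + wx * (2 * tw * (wx * (1 + tw ^ 2)))
      - 2 * (wx * (1 + tw ^ 2)) ^ 2 / (tw + I) - 2 * I * (wx * (1 + tw ^ 2)) + tw ^ 2 + 1
    = (wxx + I * (2 * wx ^ 2 - 2 * wx - I)) * (1 + tw ^ 2) := by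
  field_simp
  linear_combination ((tw ^ 2 + 1) * I + tw + tw ^ 3 - 2 * tw ^ 2 * wx ^ 2 - 2 * wx ^ 2) * Complex.I_sq

/-- For a smooth `W : ℝ² → ℂ` with `cos W ≠ 0` everywhere and
`u = tan W`, the function `u` satisfies
`u_t = u_xx - 2 u_x²/(u + i) - 2i u_x + u² + 1` if and only if `W` satisfies
`W_t = W_xx + i (2 W_x² - 2 W_x - i)`. -/
theorem stmt16
    (W : ℝ → ℝ → ℂ)
    (hW : ContDiff ℝ (⊤ : ℕ∞) ↿W)
    (hcos : ∀ x t, Complex.cos (W x t) ≠ 0)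
    (u : ℝ → ℝ → ℂ)
    (hu : ∀ x t, u x t = Complex.tan (W x t)) :
    (∀ x t, dt2 u x t
        = dx2 (dx2 u) x t - 2 * (dx2 u x t) ^ 2 / (u x t + I)
          - 2 * I * dx2 u x t + (u x t) ^ 2 + 1) ↔
    (∀ x t, dt2 W x t
        = dx2 (dx2 W) x t + I * (2 * (dx2 W x t) ^ 2 - 2 * dx2 W x t - I)) := by
  have hWd : Differentiable ℝ ↿W := hW.differentiable (by simp)
  have htan : ∀ x t, HasDerivAt (fun s => Complex.tan (W s t))
      (dx2 W x t * (1 + Complex.tan (W x t) ^ 2)) x := by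
    intro x t
    have h1 : HasDerivAt Complex.tan (1 / Complex.cos (W x t) ^ 2) (W x t) :=
      Complex.hasDerivAt_tan (hcos x t)
    have h3 := HasDerivAt.scomp x h1 (hasDerivAt_dx2' W hWd x t)
    have h4 : dx2 W x t • (1 / Complex.cos (W x t) ^ 2)
        = dx2 W x t * (1 + Complex.tan (W x t) ^ 2) := by
      rw [tan_id _ (hcos x t), smul_eq_mul]
    rw [h4] at h3
    exact h3
  have htant : ∀ x t, HasDerivAt (fun s => Complex.tan (W x s))
      (dt2 W x t * (1 + Complex.tan (W x t) ^ 2)) t := by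
    intro x t
    have h1 : HasDerivAt Complex.tan (1 / Complex.cos (W x t) ^ 2) (W x t) :=
      Complex.hasDerivAt_tan (hcos x t)
    have h3 := HasDerivAt.scomp t h1 (hasDerivAt_dt2' W hWd x t)
    have h4 : dt2 W x t • (1 / Complex.cos (W x t) ^ 2)
        = dt2 W x t * (1 + Complex.tan (W x t) ^ 2) := by
      rw [tan_id _ (hcos x t), smul_eq_mul]
    rw [h4] at h3
    exact h3
  have hux : ∀ x t, dx2 u x t = dx2 W x t * (1 + Complex.tan (W x t) ^ 2) := by
    intro x t
    have he : (fun s => u s t) = fun s => Complex.tan (W s t) := funext fun s => hu s t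
    rw [dx2]; rw [he]; exact (htan x t).deriv
  have hut : ∀ x t, dt2 u x t = dt2 W x t * (1 + Complex.tan (W x t) ^ 2) := by
    intro x t
    have he : (fun s => u x s) = fun s => Complex.tan (W x s) := funext fun s => hu x s
    rw [dt2]; rw [he]; exact (htant x t).deriv
  have hWxd : Differentiable ℝ ↿(dx2 W) := (contDiff_dx2' W hW).differentiable (by simp)
  have huxx : ∀ x t, dx2 (dx2 u) x t
      = dx2 (dx2 W) x t * (1 + Complex.tan (W x t) ^ 2)
        + dx2 W x t * (2 * Complex.tan (W x t)
            * (dx2 W x t * (1 + Complex.tan (W x t) ^ 2))) := by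
    intro x t
    have hWx : HasDerivAt (fun s => dx2 W s t) (dx2 (dx2 W) x t) x :=
      hasDerivAt_dx2' (dx2 W) hWxd x t
    have hq : HasDerivAt (fun s => 1 + Complex.tan (W s t) ^ 2)
        (2 * Complex.tan (W x t) * (dx2 W x t * (1 + Complex.tan (W x t) ^ 2))) x := by
      have h := ((htan x t).mul (htan x t)).const_add (1 : ℂ)
      have heq : (fun s => 1 + Complex.tan (W s t) ^ 2)
          = fun s => 1 + Complex.tan (W s t) * Complex.tan (W s t) := by
        funext s; ring
      rw [heq]
      convert h using 1
      rfl
      rfl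
      ring
    have hprod := hWx.mul hq
    have he : (fun s => dx2 u s t)
        = fun s => dx2 W s t * (1 + Complex.tan (W s t) ^ 2) := funext fun s => hux s t
    rw [dx2]; rw [he]; exact hprod.deriv
  apply forall₂_congr
  intro x t
  have hq0 : (1 : ℂ) + Complex.tan (W x t) ^ 2 ≠ 0 := by
    rw [tan_id _ (hcos x t)]
    exact one_div_ne_zero (pow_ne_zero _ (hcos x t))
  have hui : Complex.tan (W x t) + I ≠ 0 := by
    intro h
    apply hq0
    rw [show Complex.tan (W x t) = -I from by linear_combination h]
    linear_combination I_sq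
  rw [hut x t, hux x t, huxx x t, hu x t,
    alg (Complex.tan (W x t)) (dx2 W x t) (dx2 (dx2 W) x t) hui]
  exact mul_left_inj' hq0
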